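/- arXiv:0804.1940 — 3 statements merged into one kernel-verified Lean document; each statement's English description precedes it below -/
import Mathlib

section
/- Suppose E = L ⊕ L', where L and L' are finitely generated projective A-submodules that are both isotropic for ω (i.e. ω vanishes on L × L and on L' × L'). Then there exists an isomorphism of A-modules π : S(E) → W(E) such that π(1) = 1 and π(μ_S(x)) = μ_W(x) for every x ∈ E ⊆ T(E). -/
/-!
Context: `A` a commutative ring, `lam ∈ A`, `E` an `A`-module, `ω` an alternating
`A`-bilinear form on `E`.  `T(E)` is the tensor algebra; `W(E) = T(E)/I_W` is the Weyl
algebra, realized as the `RingQuot` of the relation `x ⊗ y ~ y ⊗ x + lam·ω(x,y)`,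
with canonical projection `μ_W`; `S(E)` is the symmetric algebra, realized as the
`RingQuot` of the relation `x ⊗ y ~ y ⊗ x`, with canonical projection `μ_S`.
-/

/-- The defining relation of the Weyl algebra `W(E)`. -/
def weylRel (A : Type*) [CommRing A] {E : Type*} [AddCommGroup E] [Module A E]
    (lam : A) (ω : E →ₗ[A] E →ₗ[A] A) :
    TensorAlgebra A E → TensorAlgebra A E → Prop := fun a b =>
  ∃ x y : E, a = TensorAlgebra.ι A x * TensorAlgebra.ι A y ∧
    b = TensorAlgebra.ι A y * TensorAlgebra.ι A x +
      algebraMap A (TensorAlgebra A E) (lam * ω x y)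

/-- The defining relation of the symmetric algebra `S(E)`. -/
def symRel (A : Type*) [CommRing A] (E : Type*) [AddCommGroup E] [Module A E] :
    TensorAlgebra A E → TensorAlgebra A E → Prop := fun a b =>
  ∃ x y : E, a = TensorAlgebra.ι A x * TensorAlgebra.ι A y ∧
    b = TensorAlgebra.ι A y * TensorAlgebra.ι A x

/-!
Splitting `x = p x + q x` along `E = L ⊕ L'` and using isotropy gives `ω = β - βᵀ` with
`β x y = ω (p x) (q y)`. More generally, let `C(κ)` be the algebra generated by `E` with
`x y - y x = κ(x, y)`, and suppose `κ₁ = κ₂ + c - cᵀ`. Letting `x` act on `C(κ₂)` as left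
multiplication by `x` plus the contraction derivation `D_{c(x, -)}` yields a representation of
`C(κ₁)`, because the contractions commute with each other and `[D_φ, x] = φ(x)`. Evaluating it
at `1` is a linear map `C(κ₁) → C(κ₂)` fixing `1` and `E`, and the one built from `-c` is its
inverse. The theorem is the case `κ₁ = 0`, `κ₂ = λω`, `c = -λβ`.
-/

section

variable {A : Type*} [CommRing A] {E : Type*} [AddCommGroup E] [Module A E]

def ccrRel (κ : E →ₗ[A] E →ₗ[A] A) : TensorAlgebra A E → TensorAlgebra A E → Prop :=
  fun a b => ∃ x y : E, a = TensorAlgebra.ι A x * TensorAlgebra.ι A y ∧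
    b = TensorAlgebra.ι A y * TensorAlgebra.ι A x + algebraMap A (TensorAlgebra A E) (κ x y)

abbrev CCRAlgebra (κ : E →ₗ[A] E →ₗ[A] A) := RingQuot (ccrRel κ)

namespace CCRAlgebra

variable {κ : E →ₗ[A] E →ₗ[A] A}

variable (κ) in
noncomputable def ι : E →ₗ[A] CCRAlgebra κ :=
  (RingQuot.mkAlgHom A (ccrRel κ)).toLinearMap ∘ₗ TensorAlgebra.ι A

theorem ι_mul_ι (x y : E) : ι κ x * ι κ y = ι κ y * ι κ x + algebraMap A _ (κ x y) := by
  simpa [ι] using RingQuot.mkAlgHom_rel A (s := ccrRel κ) ⟨x, y, rfl, rfl⟩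

@[elab_as_elim]
theorem induction_on {C : CCRAlgebra κ → Prop} (one : C 1)
    (add : ∀ a b, C a → C b → C (a + b)) (smul : ∀ (r : A) a, C a → C (r • a))
    (ι_mul : ∀ (x : E) a, C a → C (ι κ x * a))
    (w : CCRAlgebra κ) : C w := by
  obtain ⟨t, rfl⟩ := RingQuot.mkAlgHom_surjective A (ccrRel κ) w
  suffices ∀ a, C a → C (RingQuot.mkAlgHom A (ccrRel κ) t * a) by simpa using this 1 one
  induction t using TensorAlgebra.induction with
  | algebraMap r => exact fun a ha => by simpa [Algebra.smul_def] using smul r a ha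
  | ι x => exact ι_mul x
  | mul p q hp hq => exact fun a ha => by simpa [mul_assoc] using hp _ (hq a ha)
  | add p q hp hq =>
    exact fun a ha => by simpa [add_mul] using add _ _ (hp a ha) (hq a ha)

/-- An algebra map `w ↦ w + D w • ε` into the dual numbers over `CCRAlgebra κ` is the same as a
derivation `D`; here `D (ι x) = φ x`, which respects the relations since `φ` has central values. -/
noncomputable def contractLift (φ : E →ₗ[A] A) :
    CCRAlgebra κ →ₐ[A] TrivSqZeroExt (CCRAlgebra κ) (CCRAlgebra κ) :=
  RingQuot.liftAlgHom A ⟨TensorAlgebra.lift A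
    ((TrivSqZeroExt.inlAlgHom A (CCRAlgebra κ) (CCRAlgebra κ)).toLinearMap ∘ₗ ι κ +
      (TrivSqZeroExt.inrHom (CCRAlgebra κ) (CCRAlgebra κ)).restrictScalars A ∘ₗ
        Algebra.linearMap A _ ∘ₗ φ), by
    rintro _ _ ⟨x, y, rfl, rfl⟩
    ext <;> simp [TrivSqZeroExt.algebraMap_eq_inl', ι_mul_ι x y, add_comm]⟩

theorem fst_contractLift (φ : E →ₗ[A] A) (w : CCRAlgebra κ) : (contractLift φ w).fst = w := by
  have : (TrivSqZeroExt.fstHom A _ _).comp (contractLift (κ := κ) φ) = AlgHom.id A _ := by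
    apply RingQuot.ringQuot_ext'
    apply TensorAlgebra.hom_ext
    ext x
    simp [contractLift, ι]
  exact AlgHom.congr_fun this w

noncomputable def contract (φ : E →ₗ[A] A) : CCRAlgebra κ →ₗ[A] CCRAlgebra κ where
  toFun w := (contractLift φ w).snd
  map_add' a b := by simp
  map_smul' r a := by simp

theorem contract_ι (φ : E →ₗ[A] A) (x : E) :
    contract φ (ι κ x) = algebraMap A (CCRAlgebra κ) (φ x) := by
  simp [contract, contractLift, ι, Algebra.algebraMap_eq_smul_one]

theorem contract_mul (φ : E →ₗ[A] A) (a b : CCRAlgebra κ) :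
    contract φ (a * b) = a * contract φ b + contract φ a * b := by
  simp [contract, fst_contractLift]

theorem contract_one (φ : E →ₗ[A] A) : contract φ (1 : CCRAlgebra κ) = 0 := by
  simp [contract]

theorem contract_ι_mul (φ : E →ₗ[A] A) (x : E) (a : CCRAlgebra κ) :
    contract φ (ι κ x * a) = ι κ x * contract φ a + φ x • a := by
  rw [contract_mul, contract_ι, Algebra.smul_def]

theorem contract_add (φ ψ : E →ₗ[A] A) (w : CCRAlgebra κ) :
    contract (φ + ψ) w = contract φ w + contract ψ w := by
  induction w using induction_on with
  | one => simp [contract_one]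
  | add a b ha hb =>
    simp only [map_add, ha, hb]
    abel
  | smul r a ha => simp only [map_smul, ha, smul_add]
  | ι_mul x a ha =>
    simp only [contract_ι_mul, ha, LinearMap.add_apply, add_smul, mul_add]
    abel

theorem contract_smul (r : A) (φ : E →ₗ[A] A) (w : CCRAlgebra κ) :
    contract (r • φ) w = r • contract φ w := by
  induction w using induction_on with
  | one => simp [contract_one]
  | add a b ha hb => simp only [map_add, ha, hb, smul_add]
  | smul s a ha => simp only [map_smul, ha, smul_comm r s]
  | ι_mul x a ha =>
    simp only [contract_ι_mul, ha, LinearMap.smul_apply, smul_add, mul_smul_comm, smul_eq_mul,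
      mul_smul]

theorem contract_zero (w : CCRAlgebra κ) : contract (0 : E →ₗ[A] A) w = 0 := by
  simpa using contract_smul (0 : A) 0 w

theorem contract_contract_comm (φ ψ : E →ₗ[A] A) (w : CCRAlgebra κ) :
    contract φ (contract ψ w) = contract ψ (contract φ w) := by
  induction w using induction_on with
  | one => simp [contract_one]
  | add a b ha hb => simp only [map_add, ha, hb]
  | smul r a ha => simp only [map_smul, ha]
  | ι_mul x a ha =>
    simp only [contract_ι_mul, map_add, map_smul, ha]
    abel

section NormalOrder

variable {κ₁ κ₂ : E →ₗ[A] E →ₗ[A] A}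

variable (κ₂) in
noncomputable def normalOrderAction (c : E →ₗ[A] E →ₗ[A] A) :
    E →ₗ[A] Module.End A (CCRAlgebra κ₂) where
  toFun x := LinearMap.mulLeft A (ι κ₂ x) + contract (c x)
  map_add' x y := by
    ext w
    simp only [map_add, LinearMap.add_apply, LinearMap.mulLeft_apply, contract_add, add_mul]
    abel
  map_smul' r x := by ext w; simp [contract_smul]

theorem normalOrderAction_apply (c : E →ₗ[A] E →ₗ[A] A) (x : E) (w : CCRAlgebra κ₂) :
    normalOrderAction κ₂ c x w = ι κ₂ x * w + contract (c x) w := rfl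

theorem normalOrderAction_mul_normalOrderAction (c : E →ₗ[A] E →ₗ[A] A)
    (hc : κ₁ = κ₂ + c - c.flip) (x y : E) :
    normalOrderAction κ₂ c x * normalOrderAction κ₂ c y =
      normalOrderAction κ₂ c y * normalOrderAction κ₂ c x + algebraMap A _ (κ₁ x y) := by
  ext w
  simp only [Module.End.mul_apply, LinearMap.add_apply, normalOrderAction_apply,
    Module.algebraMap_end_apply, map_add, contract_ι_mul, ← mul_assoc, ι_mul_ι x y,
    add_mul, ← Algebra.smul_def, contract_contract_comm (c x) (c y) w, hc,
    LinearMap.sub_apply, LinearMap.add_apply, LinearMap.flip_apply, sub_smul, add_smul]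
  abel

noncomputable def normalOrder (c : E →ₗ[A] E →ₗ[A] A) (hc : κ₁ = κ₂ + c - c.flip) :
    CCRAlgebra κ₁ →ₗ[A] CCRAlgebra κ₂ :=
  LinearMap.applyₗ (1 : CCRAlgebra κ₂) ∘ₗ (RingQuot.liftAlgHom A
    ⟨TensorAlgebra.lift A (normalOrderAction κ₂ c), by
      rintro _ _ ⟨x, y, rfl, rfl⟩
      simpa using normalOrderAction_mul_normalOrderAction c hc x y⟩).toLinearMap

section

variable {c : E →ₗ[A] E →ₗ[A] A} {hc : κ₁ = κ₂ + c - c.flip}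

theorem normalOrder_one : normalOrder c hc 1 = 1 := by
  simp [normalOrder]

theorem normalOrder_ι_mul (x : E) (w : CCRAlgebra κ₁) :
    normalOrder c hc (ι κ₁ x * w) =
      ι κ₂ x * normalOrder c hc w + contract (c x) (normalOrder c hc w) := by
  simp [normalOrder, ι, normalOrderAction_apply]

theorem normalOrder_ι (x : E) : normalOrder c hc (ι κ₁ x) = ι κ₂ x := by
  simpa [normalOrder_one, contract_one] using normalOrder_ι_mul (hc := hc) x 1

theorem normalOrder_contract (φ : E →ₗ[A] A) (w : CCRAlgebra κ₁) :
    normalOrder c hc (contract φ w) = contract φ (normalOrder c hc w) := by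
  induction w using induction_on with
  | one => simp [normalOrder_one, contract_one]
  | add a b ha hb => simp only [map_add, ha, hb]
  | smul r a ha => simp only [map_smul, ha]
  | ι_mul x a ha =>
    simp only [contract_ι_mul, map_add, map_smul, normalOrder_ι_mul, ha,
      contract_contract_comm φ (c x)]
    abel

theorem normalOrder_normalOrder {c' : E →ₗ[A] E →ₗ[A] A} {hc' : κ₂ = κ₁ + c' - c'.flip}
    (hneg : c' = -c) (w : CCRAlgebra κ₁) : normalOrder c' hc' (normalOrder c hc w) = w := by
  induction w using induction_on with
  | one => simp [normalOrder_one]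
  | add a b ha hb => simp only [map_add, ha, hb]
  | smul r a ha => simp only [map_smul, ha]
  | ι_mul x a ha =>
    rw [normalOrder_ι_mul, map_add, normalOrder_ι_mul, normalOrder_contract, ha, add_assoc,
      ← contract_add, hneg, LinearMap.neg_apply, neg_add_cancel, contract_zero, add_zero]

end

theorem eq_add_neg_sub_flip_neg {c : E →ₗ[A] E →ₗ[A] A} (hc : κ₁ = κ₂ + c - c.flip) :
    κ₂ = κ₁ + -c - (-c).flip := by
  subst hc
  ext x y
  simp only [LinearMap.sub_apply, LinearMap.add_apply, LinearMap.neg_apply, LinearMap.flip_apply]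
  abel

noncomputable def normalOrderEquiv (c : E →ₗ[A] E →ₗ[A] A) (hc : κ₁ = κ₂ + c - c.flip) :
    CCRAlgebra κ₁ ≃ₗ[A] CCRAlgebra κ₂ :=
  LinearEquiv.ofLinearMap (normalOrder c hc) (normalOrder (-c) (eq_add_neg_sub_flip_neg hc))
    (LinearMap.ext (normalOrder_normalOrder (hc' := hc) (neg_neg c).symm))
    (LinearMap.ext (normalOrder_normalOrder (hc' := eq_add_neg_sub_flip_neg hc) rfl))

theorem normalOrderEquiv_one {c : E →ₗ[A] E →ₗ[A] A} {hc : κ₁ = κ₂ + c - c.flip} :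
    normalOrderEquiv c hc 1 = 1 :=
  normalOrder_one (hc := hc)

theorem normalOrderEquiv_ι {c : E →ₗ[A] E →ₗ[A] A} {hc : κ₁ = κ₂ + c - c.flip} (x : E) :
    normalOrderEquiv c hc (ι κ₁ x) = ι κ₂ x :=
  normalOrder_ι (hc := hc) x

end NormalOrder

end CCRAlgebra

theorem weylRel_eq_ccrRel (lam : A) (ω : E →ₗ[A] E →ₗ[A] A) :
    weylRel A lam ω = ccrRel (lam • ω) := rfl

theorem symRel_eq_ccrRel : symRel A E = ccrRel 0 := by
  funext a b
  simp only [symRel, ccrRel, LinearMap.zero_apply, map_zero, add_zero]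

theorem LinearMap.IsAlt.exists_eq_sub_flip_of_isCompl {M : Type*} [AddCommGroup M]
    [Module A M] {ω : E →ₗ[A] E →ₗ[A] M} (halt : ω.IsAlt) {L L' : Submodule A E}
    (hLL' : IsCompl L L')
    (hL : ∀ x ∈ L, ∀ y ∈ L, ω x y = 0) (hL' : ∀ x ∈ L', ∀ y ∈ L', ω x y = 0) :
    ∃ β : E →ₗ[A] E →ₗ[A] M, ω = β - β.flip := by
  set p := L.projection L' hLL'
  set q := L'.projection L hLL'.symm
  refine ⟨ω.compl₁₂ p q, ?_⟩
  ext x y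
  have hpp : ω (p x) (p y) = 0 := hL _ (Submodule.projection_apply_mem _ _) _
    (Submodule.projection_apply_mem _ _)
  have hqq : ω (q x) (q y) = 0 := hL' _ (Submodule.projection_apply_mem _ _) _
    (Submodule.projection_apply_mem _ _)
  have hpq (z : E) : p z + q z = z := Submodule.projection_add_projection_eq_self hLL' z
  nth_rw 1 [← hpq x, ← hpq y]
  simp only [map_add, LinearMap.add_apply, LinearMap.sub_apply, LinearMap.compl₁₂_apply,
    LinearMap.flip_apply, hpp, hqq, ← halt.neg (q x) (p y)]
  abel

end

theorem stmt0_general (A : Type*) [CommRing A] (E : Type*) [AddCommGroup E] [Module A E]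
    (lam : A) (ω : E →ₗ[A] E →ₗ[A] A) (halt : ∀ x : E, ω x x = 0)
    (L L' : Submodule A E) (hcompl : IsCompl L L')
    (hLiso : ∀ x ∈ L, ∀ y ∈ L, ω x y = 0)
    (hL'iso : ∀ x ∈ L', ∀ y ∈ L', ω x y = 0) :
    ∃ π : RingQuot (symRel A E) ≃ₗ[A] RingQuot (weylRel A lam ω),
      π 1 = 1 ∧
      ∀ x : E,
        π (RingQuot.mkAlgHom A (symRel A E) (TensorAlgebra.ι A x)) =
          RingQuot.mkAlgHom A (weylRel A lam ω) (TensorAlgebra.ι A x) := by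
  obtain ⟨β, hβ⟩ :=
    LinearMap.IsAlt.exists_eq_sub_flip_of_isCompl halt hcompl hLiso hL'iso
  have hc : (0 : E →ₗ[A] E →ₗ[A] A) = lam • ω + -(lam • β) - (-(lam • β)).flip := by
    subst hβ
    ext x y
    simp only [LinearMap.zero_apply, LinearMap.sub_apply, LinearMap.add_apply,
      LinearMap.neg_apply, LinearMap.smul_apply, LinearMap.flip_apply, smul_sub]
    abel
  rw [weylRel_eq_ccrRel, symRel_eq_ccrRel]
  exact ⟨CCRAlgebra.normalOrderEquiv _ hc, CCRAlgebra.normalOrderEquiv_one,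
    CCRAlgebra.normalOrderEquiv_ι⟩

/-- If `E = L ⊕ L'` with `L, L'` finitely generated projective
isotropic submodules, then there is an `A`-module isomorphism `π : S(E) ≅ W(E)` with
`π 1 = 1` and `π (μ_S x) = μ_W x` for `x ∈ E`. -/
theorem stmt0 (A : Type*) [CommRing A] (E : Type*) [AddCommGroup E] [Module A E]
    (lam : A) (ω : E →ₗ[A] E →ₗ[A] A) (halt : ∀ x : E, ω x x = 0)
    (L L' : Submodule A E) (hcompl : IsCompl L L')
    (hLfin : Module.Finite A L) (hLproj : Module.Projective A L)
    (hL'fin : Module.Finite A L') (hL'proj : Module.Projective A L')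
    (hLiso : ∀ x ∈ L, ∀ y ∈ L, ω x y = 0)
    (hL'iso : ∀ x ∈ L', ∀ y ∈ L', ω x y = 0) :
    ∃ π : RingQuot (symRel A E) ≃ₗ[A] RingQuot (weylRel A lam ω),
      π 1 = 1 ∧
      ∀ x : E,
        π (RingQuot.mkAlgHom A (symRel A E) (TensorAlgebra.ι A x)) =
          RingQuot.mkAlgHom A (weylRel A lam ω) (TensorAlgebra.ι A x) :=
  stmt0_general A E lam ω halt L L' hcompl hLiso hL'iso
end

section
/- The restrictions of μ_S and of μ_W to S̃(E) are A-module isomorphisms of S̃(E) onto S(E) and onto W(E) respectively; consequently the family {μ_S(e_I) : I a nonincreasing sequence} is an A-basis of S(E) and the family {μ_W(e_I) : I a nonincreasing sequence} is an A-basis of W(E). -/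
/-- `e_I = e_{i₁} ⊗ ⋯ ⊗ e_{i_p} ∈ T(E)` for a list of indices `I` (with `e_∅ = 1`). -/
noncomputable def eTensor {A : Type*} [CommRing A] {E : Type*} [AddCommGroup E] [Module A E]
    {n : ℕ} (e : Module.Basis (Fin n) A E) (I : List (Fin n)) : TensorAlgebra A E :=
  (I.map fun i => TensorAlgebra.ι A (e i)).prod

/-- `S̃(E)`: the `A`-submodule of `T(E)` spanned by the tensors `e_I` over all
nonincreasing sequences `I`. -/
def stilde {A : Type*} [CommRing A] {E : Type*} [AddCommGroup E] [Module A E]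
    {n : ℕ} (e : Module.Basis (Fin n) A E) : Submodule A (TensorAlgebra A E) :=
  Submodule.span A {t | ∃ I : List (Fin n), List.Pairwise (· ≥ ·) I ∧ t = eTensor e I}

/-!
Modulo the relations `e_i e_j = e_j e_i + λ ω(e_i, e_j)`, any word `e_L` can be reordered into
the nonincreasing word with the same letters at the cost of shorter words, so the images of
the `e_I` span `W(E)` (and `S(E)`, the case `λ = 0`).  For independence, `W(E)` acts on the
polynomial ring `A[X_i]` by `e_i ↦ X_i + ∑_{j > i} λ ω(e_i, e_j) ∂/∂X_j`.  For nonincreasing `I`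
this gives `e_I · 1 = X^I`: when `e_i` acts, only variables `X_j` with `j ≤ i` are present, and
these are killed by its derivation part.  The monomials being independent, so are the `e_I`.
-/

open MvPolynomial

section Straightening

variable {A B ι : Type*} [CommRing A] [Ring B] [Algebra A B] {u : ι → B} {c : ι → ι → A}

theorem List.Perm.prod_map_sub_mem_span
    (hu : ∀ i j, u i * u j = u j * u i + algebraMap A B (c i j)) {L L' : List ι}
    (h : L.Perm L') :
    (L.map u).prod - (L'.map u).prod ∈
      Submodule.span A {x | ∃ M : List ι, M.length < L.length ∧ (M.map u).prod = x} := by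
  induction h with
  | nil => simp
  | @cons i L L' _ ih =>
    have := Submodule.mem_map_of_mem (f := LinearMap.mulLeft A (u i)) ih
    rw [Submodule.map_span, LinearMap.mulLeft_apply, mul_sub] at this
    simp only [List.map_cons, List.prod_cons]
    refine Submodule.span_mono ?_ this
    rintro _ ⟨_, ⟨M, hM, rfl⟩, rfl⟩
    exact ⟨i :: M, by simpa using hM, by simp⟩
  | swap i j L =>
    have hdiff : (u j * u i - u i * u j) * (L.map u).prod = c j i • (L.map u).prod := by
      rw [hu j i, add_sub_cancel_left, Algebra.smul_def]
    simp only [List.map_cons, List.prod_cons, ← mul_assoc, ← sub_mul, hdiff]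
    exact Submodule.smul_mem _ _ (Submodule.subset_span ⟨L, by simp, rfl⟩)
  | trans h₁ _ ih₁ ih₂ =>
    rw [← sub_add_sub_cancel]
    exact add_mem ih₁ (h₁.length_eq ▸ ih₂)

theorem prod_map_mem_span_sorted [LinearOrder ι]
    (hu : ∀ i j, u i * u j = u j * u i + algebraMap A B (c i j)) (L : List ι) :
    (L.map u).prod ∈ Submodule.span A
      (Set.range fun I : {I : List ι // I.Pairwise (· ≥ ·)} => (I.1.map u).prod) := by
  induction hL : L.length using Nat.strong_induction_on generalizing L with
  | _ d ih =>
    have hsort := (L.perm_insertionSort (· ≥ ·)).symm.prod_map_sub_mem_span hu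
    rw [← sub_add_cancel (L.map u).prod ((L.insertionSort (· ≥ ·)).map u).prod]
    refine add_mem ?_
      (Submodule.subset_span ⟨⟨_, List.sortedGE_insertionSort.pairwise⟩, rfl⟩)
    refine Submodule.span_le.mpr ?_ hsort
    rintro _ ⟨M, hM, rfl⟩
    exact ih _ (by simp_all) M rfl

end Straightening

section WeylOperators

variable {σ A : Type*} [CommRing A] [LinearOrder σ] (c : σ → σ → A)

noncomputable def weylDeriv (i : σ) : Derivation A (MvPolynomial σ A) (MvPolynomial σ A) :=
  mkDerivation A fun j => C (if i < j then c i j else 0)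

noncomputable def weylOp (i : σ) : Module.End A (MvPolynomial σ A) :=
  LinearMap.mulLeft A (X i) + (weylDeriv c i : Module.End A (MvPolynomial σ A))

lemma weylDeriv_X (i j : σ) : weylDeriv c i (X j) = C (if i < j then c i j else 0) :=
  mkDerivation_X _ _ _

lemma weylDeriv_X_mul (i j : σ) (p : MvPolynomial σ A) :
    weylDeriv c i (X j * p) = X j * weylDeriv c i p + (if i < j then c i j else 0) • p := by
  rw [Derivation.leibniz, weylDeriv_X, smul_eq_mul, smul_eq_mul, smul_eq_C_mul, mul_comm p]

lemma weylDeriv_comm (i j : σ) (p : MvPolynomial σ A) :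
    weylDeriv c i (weylDeriv c j p) = weylDeriv c j (weylDeriv c i p) := by
  have : ⁅weylDeriv c i, weylDeriv c j⁆ = 0 := derivation_ext fun k => by
    simp [Derivation.commutator_apply, weylDeriv_X, derivation_C]
  simpa [Derivation.commutator_apply, sub_eq_zero] using congr($this p)

lemma weylOp_mul_weylOp (hc₀ : ∀ i, c i i = 0) (hc : ∀ i j, -c i j = c j i) (i j : σ) :
    weylOp c i * weylOp c j = weylOp c j * weylOp c i + algebraMap A _ (c i j) := by
  refine LinearMap.ext fun p => ?_
  have hd : (if i < j then c i j else 0) = (if j < i then c j i else 0) + c i j := by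
    rcases lt_trichotomy i j with h | rfl | h
    · simp [h, h.not_gt]
    · simp [hc₀]
    · simp [h, h.not_gt, ← hc i j]
  simp only [weylOp, Module.End.mul_apply, LinearMap.add_apply, LinearMap.mulLeft_apply,
    Derivation.coeFn_coe, map_add, weylDeriv_X_mul, weylDeriv_comm c i j, hd,
    Module.algebraMap_end_apply, add_smul]
  ring

lemma weylDeriv_prod_X_eq_zero {i : σ} {L : List σ} (hL : ∀ j ∈ L, j ≤ i) :
    weylDeriv c i (L.map X).prod = 0 := by
  induction L with
  | nil => exact (weylDeriv c i).map_one_eq_zero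
  | cons j L ih =>
    simp only [List.forall_mem_cons] at hL
    rw [List.map_cons, List.prod_cons, weylDeriv_X_mul, ih hL.2, if_neg hL.1.not_gt]
    simp

lemma weylOp_prod_X (i : σ) {L : List σ} (hL : ∀ j ∈ L, j ≤ i) :
    weylOp c i (L.map X).prod = ((i :: L).map X).prod := by
  simp [weylOp, weylDeriv_prod_X_eq_zero c hL]

end WeylOperators

section Monomials

variable {σ A : Type*} [CommRing A]

lemma prod_map_X_eq_monomial [DecidableEq σ] (L : List σ) :
    (L.map (X : σ → MvPolynomial σ A)).prod =
      monomial (Multiset.toFinsupp (L : Multiset σ)) 1 := by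
  induction L with
  | nil => simp
  | cons i L ih =>
    rw [List.map_cons, List.prod_cons, ih, X, monomial_mul, one_mul, ← Multiset.cons_coe,
      ← Multiset.singleton_add, Multiset.toFinsupp_add, Multiset.toFinsupp_singleton]

lemma linearIndependent_prod_map_X [LinearOrder σ] :
    LinearIndependent A fun I : {I : List σ // I.Pairwise (· ≥ ·)} =>
      (I.1.map (X : σ → MvPolynomial σ A)).prod := by
  simp only [prod_map_X_eq_monomial]
  refine (basisMonomials σ A).linearIndependent.comp _ fun I J h => Subtype.ext ?_
  have : (I.1 : Multiset σ) = J.1 := Multiset.toFinsupp.injective h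
  exact (Multiset.coe_eq_coe.mp this).eq_of_sortedGE I.2.sortedGE J.2.sortedGE

end Monomials

section WeylRepresentation

variable {A E : Type*} [CommRing A] [AddCommGroup E] [Module A E] {n : ℕ}
  (e : Module.Basis (Fin n) A E) (c : E →ₗ[A] E →ₗ[A] A)

noncomputable def weylRep : TensorAlgebra A E →ₐ[A] Module.End A (MvPolynomial (Fin n) A) :=
  TensorAlgebra.lift A (e.constr A (weylOp fun i j => c (e i) (e j)))

lemma weylRep_ι_basis (i : Fin n) :
    weylRep e c (TensorAlgebra.ι A (e i)) = weylOp (fun i j => c (e i) (e j)) i := by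
  rw [weylRep, TensorAlgebra.lift_ι_apply, e.constr_basis]

lemma weylRep_ι_mul_ι (hc : c.IsAlt) (x y : E) :
    weylRep e c (TensorAlgebra.ι A x * TensorAlgebra.ι A y) =
      weylRep e c (TensorAlgebra.ι A y * TensorAlgebra.ι A x) + algebraMap A _ (c x y) := by
  let ρ := (weylRep e c).toLinearMap ∘ₗ TensorAlgebra.ι A
  let F := (LinearMap.mul A (Module.End A (MvPolynomial (Fin n) A))).compl₁₂ ρ ρ
  have : F = F.flip + c.compr₂ (Algebra.linearMap A _) := by
    refine LinearMap.ext_basis e e fun i j => ?_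
    simpa only [F, ρ, LinearMap.add_apply, LinearMap.flip_apply, LinearMap.compl₁₂_apply,
      LinearMap.compr₂_apply, LinearMap.mul_apply', Algebra.linearMap_apply, LinearMap.coe_comp,
      Function.comp_apply, AlgHom.toLinearMap_apply, weylRep_ι_basis] using
      weylOp_mul_weylOp (fun i j => c (e i) (e j)) (fun i => hc (e i)) (fun i j => hc.neg _ _) i j
  simpa only [F, ρ, LinearMap.add_apply, LinearMap.flip_apply, LinearMap.compl₁₂_apply,
    LinearMap.compr₂_apply, LinearMap.mul_apply', Algebra.linearMap_apply, LinearMap.coe_comp,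
    Function.comp_apply, AlgHom.toLinearMap_apply, map_mul] using LinearMap.congr_fun₂ this x y

lemma weylRep_eTensor_apply_one {I : List (Fin n)} (hI : I.Pairwise (· ≥ ·)) :
    weylRep e c (eTensor e I) 1 = (I.map X).prod := by
  induction I with
  | nil => simp [eTensor]
  | cons i I ih =>
    rw [List.pairwise_cons] at hI
    rw [eTensor, List.map_cons, List.prod_cons, map_mul, Module.End.mul_apply, ← eTensor,
      ih hI.2, weylRep_ι_basis, weylOp_prod_X _ _ hI.1]

end WeylRepresentation

section TensorAlgebra

variable {A E : Type*} [CommRing A] [AddCommGroup E] [Module A E] {n : ℕ}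
  (e : Module.Basis (Fin n) A E)

lemma eTensor_append (L₁ L₂ : List (Fin n)) :
    eTensor e (L₁ ++ L₂) = eTensor e L₁ * eTensor e L₂ := by
  simp [eTensor]

lemma map_eTensor {B : Type*} [Semiring B] [Algebra A B] (f : TensorAlgebra A E →ₐ[A] B)
    (L : List (Fin n)) :
    f (eTensor e L) = (L.map fun i => f (TensorAlgebra.ι A (e i))).prod := by
  simp [eTensor, map_list_prod, Function.comp_def]

lemma span_range_eTensor : Submodule.span A (Set.range (eTensor e)) = ⊤ := by
  let S := (Submodule.span A (Set.range (eTensor e))).toSubalgebra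
    (Submodule.subset_span ⟨[], rfl⟩) fun x y hx hy => by
      have := Submodule.span_mul_span A (Set.range (eTensor e)) (Set.range (eTensor e)) ▸
        Submodule.mul_mem_mul hx hy
      refine Submodule.span_mono ?_ this
      rintro _ ⟨_, ⟨L₁, rfl⟩, _, ⟨L₂, rfl⟩, rfl⟩
      exact ⟨L₁ ++ L₂, eTensor_append e L₁ L₂⟩
  have hι : Set.range (TensorAlgebra.ι A) ⊆ (S : Set (TensorAlgebra A E)) := by
    rintro _ ⟨x, rfl⟩
    rw [← e.sum_repr x, map_sum]
    refine S.sum_mem fun i _ => ?_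
    rw [map_smul]
    exact S.smul_mem (Submodule.subset_span ⟨[i], by simp [eTensor]⟩) _
  have := Algebra.adjoin_le hι
  rw [TensorAlgebra.adjoin_range_ι] at this
  exact eq_top_iff.mpr fun x _ => this (Algebra.mem_top (x := x))

theorem span_map_eTensor_sorted_eq_top {B : Type*} [Ring B] [Algebra A B]
    (f : TensorAlgebra A E →ₐ[A] B) (hf : Function.Surjective f) (c : Fin n → Fin n → A)
    (hc : ∀ i j, f (TensorAlgebra.ι A (e i)) * f (TensorAlgebra.ι A (e j)) =
      f (TensorAlgebra.ι A (e j)) * f (TensorAlgebra.ι A (e i)) + algebraMap A B (c i j)) :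
    Submodule.span A
      (Set.range fun I : {I : List (Fin n) // I.Pairwise (· ≥ ·)} => f (eTensor e I.1)) = ⊤ := by
  have hrange : LinearMap.range f.toLinearMap = ⊤ := LinearMap.range_eq_top.mpr hf
  rw [LinearMap.range_eq_map, ← span_range_eTensor e, Submodule.map_span] at hrange
  rw [eq_top_iff, ← hrange, Submodule.span_le]
  rintro _ ⟨_, ⟨L, rfl⟩, rfl⟩
  simpa only [SetLike.mem_coe, AlgHom.toLinearMap_apply, map_eTensor] using
    prod_map_mem_span_sorted hc L

lemma stilde_eq_span_range :
    stilde e = Submodule.span A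
      (Set.range fun I : {I : List (Fin n) // I.Pairwise (· ≥ ·)} => eTensor e I.1) := by
  rw [stilde]
  congr 1
  ext t
  exact ⟨fun ⟨I, hI, ht⟩ => ⟨⟨I, hI⟩, ht.symm⟩, fun ⟨I, ht⟩ => ⟨I.1, I.2, ht.symm⟩⟩

end TensorAlgebra

theorem Submodule.bijective_comp_subtype_span {R M N ι : Type*} [Semiring R]
    [AddCommMonoid M] [Module R M] [AddCommMonoid N] [Module R N] (f : M →ₗ[R] N) (v : ι → M)
    (hli : LinearIndependent R (f ∘ v)) (hsp : span R (Set.range (f ∘ v)) = ⊤) :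
    Function.Bijective (f ∘ₗ (span R (Set.range v)).subtype) := by
  let b := Module.Basis.span hli.of_comp
  let b' := Module.Basis.mk hli hsp.ge
  have : f ∘ₗ (span R (Set.range v)).subtype = (b.equiv b' (Equiv.refl ι)).toLinearMap :=
    b.ext fun i => by rw [LinearEquiv.coe_coe, Module.Basis.equiv_apply]; simp [b, b']
  rw [this]
  exact (b.equiv b' (Equiv.refl ι)).bijective

section WeylAlgebra

variable {A E : Type*} [CommRing A] [AddCommGroup E] [Module A E] {n : ℕ} (lam : A)
  {ω : E →ₗ[A] E →ₗ[A] A} (e : Module.Basis (Fin n) A E)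

lemma mkAlgHom_weylRel_ι_mul_ι (x y : E) :
    RingQuot.mkAlgHom A (weylRel A lam ω) (TensorAlgebra.ι A x) *
        RingQuot.mkAlgHom A (weylRel A lam ω) (TensorAlgebra.ι A y) =
      RingQuot.mkAlgHom A (weylRel A lam ω) (TensorAlgebra.ι A y) *
          RingQuot.mkAlgHom A (weylRel A lam ω) (TensorAlgebra.ι A x) +
        algebraMap A _ (lam * ω x y) := by
  rw [← map_mul, RingQuot.mkAlgHom_rel A ⟨x, y, rfl, rfl⟩, map_add, map_mul, AlgHom.commutes]

noncomputable def weylAlgebraRep (hω : ω.IsAlt) :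
    RingQuot (weylRel A lam ω) →ₐ[A] Module.End A (MvPolynomial (Fin n) A) :=
  RingQuot.liftAlgHom A ⟨weylRep e (lam • ω), by
    rintro _ _ ⟨x, y, rfl, rfl⟩
    have hc : (lam • ω).IsAlt := fun x => by simp [hω x]
    simp [weylRep_ι_mul_ι e _ hc x y]⟩

theorem linearIndependent_mkAlgHom_weylRel_eTensor (hω : ω.IsAlt) :
    LinearIndependent A fun I : {I : List (Fin n) // I.Pairwise (· ≥ ·)} =>
      RingQuot.mkAlgHom A (weylRel A lam ω) (eTensor e I.1) := by
  refine LinearIndependent.of_comp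
    (LinearMap.applyₗ 1 ∘ₗ (weylAlgebraRep lam e hω).toLinearMap) ?_
  convert linearIndependent_prod_map_X (σ := Fin n) (A := A) using 1
  ext I : 1
  simp [weylAlgebraRep, weylRep_eTensor_apply_one e _ I.2]

theorem weyl_pbw (hω : ω.IsAlt) :
    Function.Bijective
      ((RingQuot.mkAlgHom A (weylRel A lam ω)).toLinearMap.comp (stilde e).subtype) ∧
    ∃ b : Module.Basis {I : List (Fin n) // I.Pairwise (· ≥ ·)} A (RingQuot (weylRel A lam ω)),
      ∀ I, b I = RingQuot.mkAlgHom A (weylRel A lam ω) (eTensor e I.1) := by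
  have hli := linearIndependent_mkAlgHom_weylRel_eTensor lam e hω
  have hsp := span_map_eTensor_sorted_eq_top e _ (RingQuot.mkAlgHom_surjective A _) _
    fun i j => mkAlgHom_weylRel_ι_mul_ι lam (ω := ω) (e i) (e j)
  rw [stilde_eq_span_range]
  exact ⟨Submodule.bijective_comp_subtype_span _ _ hli hsp, Module.Basis.mk hli hsp.ge,
    fun I => Module.Basis.mk_apply _ _ _⟩

end WeylAlgebra

lemma symRel_eq_weylRel_zero {A E : Type*} [CommRing A] [AddCommGroup E] [Module A E]
    (ω : E →ₗ[A] E →ₗ[A] A) : symRel A E = weylRel A 0 ω := by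
  ext a b
  simp [symRel, weylRel]

/-- **Poincaré–Birkhoff–Witt.** The restrictions of `μ_S` and `μ_W` to
`S̃(E)` are `A`-module isomorphisms onto `S(E)` resp. `W(E)`; consequently the families
`{μ_S(e_I)}` and `{μ_W(e_I)}` indexed by nonincreasing sequences `I` are `A`-bases of
`S(E)` resp. `W(E)`. -/
theorem stmt2 (A : Type*) [CommRing A] (E : Type*) [AddCommGroup E] [Module A E]
    (lam : A) (ω : E →ₗ[A] E →ₗ[A] A) (halt : ∀ x : E, ω x x = 0)
    (ν ν' : ℕ) (e : Module.Basis (Fin (ν + ν')) A E) :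
    Function.Bijective
      ((RingQuot.mkAlgHom A (symRel A E)).toLinearMap.comp (stilde e).subtype) ∧
    Function.Bijective
      ((RingQuot.mkAlgHom A (weylRel A lam ω)).toLinearMap.comp (stilde e).subtype) ∧
    (∃ bS : Module.Basis {I : List (Fin (ν + ν')) // List.Pairwise (· ≥ ·) I} A
        (RingQuot (symRel A E)),
      ∀ I, bS I = RingQuot.mkAlgHom A (symRel A E) (eTensor e I.1)) ∧
    (∃ bW : Module.Basis {I : List (Fin (ν + ν')) // List.Pairwise (· ≥ ·) I} A
        (RingQuot (weylRel A lam ω)),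
      ∀ I, bW I = RingQuot.mkAlgHom A (weylRel A lam ω) (eTensor e I.1)) := by
  obtain ⟨hbijS, hbasisS⟩ := weyl_pbw 0 e halt
  obtain ⟨hbijW, hbasisW⟩ := weyl_pbw lam e halt
  rw [symRel_eq_weylRel_zero ω]
  exact ⟨hbijS, hbijW, hbasisS, hbasisW⟩
end

section
/- Let e'_i = Σ_j A_i^j e_j (1 ≤ i ≤ ν+ν') be another basis of E, where the invertible matrix (A_i^j) over A is block-diagonal with respect to the splitting, i.e. A_α^β = 0 and A_β^α = 0 whenever α ≤ ν < β (so e'_1, …, e'_ν is a basis of L and e'_{ν+1}, …, e'_{ν+ν'} is a basis of L'). Let S̃'(E) ⊆ T(E) be the A-submodule spanned by the tensors e'_I over all nonincreasing sequences I. Then the restrictions of μ_S and μ_W to S̃'(E) are A-module isomorphisms onto S(E) and W(E), and the composite isomorphisms coincide: μ_W ∘ (μ_S|S̃'(E))⁻¹ = μ_W ∘ (μ_S|S̃(E))⁻¹ as maps S(E) → W(E). -/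
/-- `f_I = f_{i₁} ⊗ ⋯ ⊗ f_{i_p} ∈ T(E)` for a list of indices `I` (with `f_∅ = 1`). -/
noncomputable def famTensor {A : Type*} [CommRing A] {E : Type*} [AddCommGroup E]
    [Module A E] {n : ℕ} (f : Fin n → E) (I : List (Fin n)) : TensorAlgebra A E :=
  (I.map fun i => TensorAlgebra.ι A (f i)).prod

/-- The `A`-submodule of `T(E)` spanned by the tensors `f_I` over all nonincreasing
sequences `I`. -/
noncomputable def stildeOf {A : Type*} [CommRing A] {E : Type*} [AddCommGroup E]
    [Module A E] {n : ℕ} (f : Fin n → E) : Submodule A (TensorAlgebra A E) :=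
  Submodule.span A {t | ∃ I : List (Fin n), List.Pairwise (· ≥ ·) I ∧ t = famTensor f I}


/-!
For an alternating form `κ`, the quotient of `T(E)` by `x ⊗ y = y ⊗ x + κ(x, y)` acts on the
polynomial ring `A[X₁, …, Xₙ]`: the basis vector `b i` acts by `X i + ∑_{k > i} κ(b i, b k) ∂/∂X k`.
These operators satisfy the defining relations, since their derivation parts commute and
`[D, X j] = D (X j)` for a derivation `D`. Applying a tensor to `1` and reading each monomial as
the nonincreasing word `b_I` gives a linear map `normalForm : T(E) → S̃(E)` which fixes `S̃(E)`,
preserves classes modulo the relations (moving `b i` into its place in a nonincreasing word is the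
same computation as applying the operator of `b i` to a monomial) and depends only on the class.
So the projection restricted to `S̃(E)` is bijective for every basis, `e'` in particular; `κ = 0`
gives `S(E)` and `κ = λ ω` gives `W(E)`.

For the comparison, a nonincreasing word `e'_I` is a word in `L'` followed by a word in `L`, and
since the change of basis is block-diagonal it expands into words `e_{J₁} e_{J₂}` with `J₁` indexing
vectors of `L'` and `J₂` vectors of `L`. The symmetric normal form of such a word sorts `J₁` and
`J₂` separately, and since `L` and `L'` are isotropic, permuting letters inside each block does
not change the class in `W(E)`.
-/

noncomputable section

open TensorAlgebra MvPolynomial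

namespace PBW

section Words

variable {α : Type*} [LinearOrder α]

def descWord (d : α →₀ ℕ) : List α := d.toMultiset.sort (· ≥ ·)

theorem pairwise_descWord (d : α →₀ ℕ) : (descWord d).Pairwise (· ≥ ·) :=
  Multiset.pairwise_sort _ _

theorem descWord_eq {d : α →₀ ℕ} {I : List α} (hI : I.Pairwise (· ≥ ·))
    (h : (I : Multiset α) = d.toMultiset) : descWord d = I :=
  List.Perm.eq_of_pairwise' (pairwise_descWord d) hI <| Multiset.coe_eq_coe.mp <| by
    rw [descWord, Multiset.sort_eq, h]

theorem descWord_toFinsupp {I : List α} (hI : I.Pairwise (· ≥ ·)) :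
    descWord (Multiset.toFinsupp I) = I :=
  descWord_eq hI (Multiset.toFinsupp_toMultiset _).symm

theorem perm_descWord_toFinsupp (I : List α) : (descWord (Multiset.toFinsupp I)).Perm I :=
  Multiset.coe_eq_coe.mp <| by rw [descWord, Multiset.sort_eq, Multiset.toFinsupp_toMultiset]

theorem count_descWord (d : α →₀ ℕ) (k : α) : (descWord d).count k = d k := by
  rw [← Multiset.coe_count, descWord, Multiset.sort_eq, Finsupp.count_toMultiset]

theorem descWord_zero : descWord (0 : α →₀ ℕ) = [] := by
  simp [descWord]

theorem descWord_add_single (d : α →₀ ℕ) (i : α) :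
    descWord (d + Finsupp.single i 1) = (descWord d).orderedInsert (· ≥ ·) i :=
  descWord_eq ((pairwise_descWord d).orderedInsert i _) <| by
    rw [Multiset.coe_eq_coe.mpr (List.perm_orderedInsert _ i _), ← Multiset.cons_coe, descWord,
      Multiset.sort_eq, Finsupp.toMultiset_add, Finsupp.toMultiset_single, one_smul, add_comm,
      Multiset.singleton_add]

theorem descWord_sub_single {d : α →₀ ℕ} {k : α} (h : d k ≠ 0) :
    descWord (d - Finsupp.single k 1) = (descWord d).erase k := by
  refine descWord_eq ((pairwise_descWord d).sublist List.erase_sublist) ?_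
  rw [← Multiset.coe_erase, descWord, Multiset.sort_eq]
  ext a
  rcases eq_or_ne a k with rfl | hak
  · simp [Multiset.count_erase_self, Finsupp.count_toMultiset]
  · simp [Multiset.count_erase_of_ne hak, Finsupp.count_toMultiset, Ne.symm hak]

end Words

theorem erase_cons_of_pairwise {α : Type*} [LinearOrder α] {j k : α} {I : List α}
    (hI : (j :: I).Pairwise (· ≥ ·)) (hk : k ∈ I) : (j :: I).erase k = j :: I.erase k := by
  rcases eq_or_ne k j with rfl | hkj
  · obtain ⟨a, I, rfl⟩ := List.exists_cons_of_ne_nil (List.ne_nil_of_mem hk)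
    obtain rfl : a = k := le_antisymm (List.rel_of_pairwise_cons hI List.mem_cons_self)
      (List.mem_cons.mp hk |>.elim le_of_eq (List.rel_of_pairwise_cons hI.of_cons))
    simp
  · exact List.erase_cons_tail (by simpa using hkj.symm)

theorem exists_eq_append_of_pairwise {α : Type*} [LinearOrder α] {I : List α}
    (hI : I.Pairwise (· ≥ ·)) {H : Set α} (hH : IsUpperSet H) [DecidablePred (· ∈ H)] :
    ∃ J₁ J₂ : List α, I = J₁ ++ J₂ ∧ (∀ x ∈ J₁, x ∈ H) ∧ ∀ x ∈ J₂, x ∉ H := by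
  refine ⟨I.takeWhile (· ∈ H), I.dropWhile (· ∈ H), List.takeWhile_append_dropWhile.symm,
    fun x hx => by simpa using List.mem_takeWhile_imp hx, fun x hx => ?_⟩
  obtain ⟨h, t, hd⟩ := List.exists_cons_of_ne_nil (List.ne_nil_of_mem hx)
  have hh : h ∉ H := by simpa [hd] using List.head_dropWhile_not (· ∈ H) (l := I) (by simp [hd])
  have hs : (h :: t).Pairwise (· ≥ ·) := hd ▸ hI.sublist (List.dropWhile_sublist _)
  rw [hd] at hx
  rcases List.mem_cons.mp hx with rfl | hx
  · exact hh
  · exact fun hxH => hh (hH (List.rel_of_pairwise_cons hs hx) hxH)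

section CommRel

variable {A : Type*} [CommRing A] {E : Type*} [AddCommGroup E] [Module A E] {n : ℕ}

@[simp]
theorem famTensor_nil (f : Fin n → E) : famTensor (A := A) f [] = 1 := rfl

@[simp]
theorem famTensor_cons (f : Fin n → E) (i : Fin n) (I : List (Fin n)) :
    famTensor (A := A) f (i :: I) = ι A (f i) * famTensor f I := by
  simp [famTensor]

theorem famTensor_append (f : Fin n → E) (I J : List (Fin n)) :
    famTensor (A := A) f (I ++ J) = famTensor f I * famTensor f J := by
  simp [famTensor]

def commRel (κ : E →ₗ[A] E →ₗ[A] A) : TensorAlgebra A E → TensorAlgebra A E → Prop :=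
  fun a c => ∃ x y : E, a = ι A x * ι A y ∧ c = ι A y * ι A x + algebraMap A _ (κ x y)

theorem symRel_eq_commRel : symRel A E = commRel (0 : E →ₗ[A] E →ₗ[A] A) := by
  ext a c
  simp [symRel, commRel]

theorem weylRel_eq_commRel (lam : A) (ω : E →ₗ[A] E →ₗ[A] A) :
    weylRel A lam ω = commRel (lam • ω) := by
  ext a c
  simp [weylRel, commRel]

variable (κ : E →ₗ[A] E →ₗ[A] A)

local notation "μ" => RingQuot.mkAlgHom A (commRel κ)

theorem mkAlgHom_ι_mul_ι (x y : E) :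
    μ (ι A x * ι A y) = μ (ι A y * ι A x) + algebraMap A _ (κ x y) := by
  simpa using RingQuot.mkAlgHom_rel A (s := commRel κ) ⟨x, y, rfl, rfl⟩

theorem mkAlgHom_famTensor_perm {f : Fin n → E} {J J' : List (Fin n)} (h : J.Perm J')
    (hJ : ∀ a ∈ J, ∀ c ∈ J, κ (f a) (f c) = 0) :
    μ (famTensor f J) = μ (famTensor f J') := by
  induction h with
  | nil => rfl
  | cons x _ ih =>
    simp only [famTensor_cons, map_mul,
      ih fun a ha c hc => hJ a (List.mem_cons_of_mem _ ha) c (List.mem_cons_of_mem _ hc)]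
  | swap x y l =>
    have hxy : κ (f y) (f x) = 0 := hJ y (by simp) x (by simp)
    simp only [famTensor_cons, ← mul_assoc, map_mul μ (_ * _)]
    rw [mkAlgHom_ι_mul_ι, hxy, map_zero, add_zero]
  | trans h₁ _ ih₁ ih₂ =>
    rw [ih₁ hJ, ih₂ fun a ha c hc => hJ a (h₁.mem_iff.mpr ha) c (h₁.mem_iff.mpr hc)]

end CommRel

section Representation

variable {A : Type*} [CommRing A] {E : Type*} [AddCommGroup E] [Module A E] {n : ℕ}
  (κ : E →ₗ[A] E →ₗ[A] A) (b : Module.Basis (Fin n) A E)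

def pbwCoeff (i k : Fin n) : A := if i < k then κ (b i) (b k) else 0

theorem pbwCoeff_sub_pbwCoeff (hκ : ∀ x, κ x x = 0) (i j : Fin n) :
    pbwCoeff κ b i j - pbwCoeff κ b j i = κ (b i) (b j) := by
  have hskew : κ (b j) (b i) = -κ (b i) (b j) := LinearMap.IsAlt.neg hκ _ _ |>.symm
  rcases lt_trichotomy i j with h | rfl | h
  · simp [pbwCoeff, h, h.not_gt]
  · simp [pbwCoeff, hκ]
  · simp [pbwCoeff, h, h.not_gt, hskew]

def pbwDerivation (i : Fin n) :
    Derivation A (MvPolynomial (Fin n) A) (MvPolynomial (Fin n) A) :=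
  mkDerivation A fun k => C (pbwCoeff κ b i k)

theorem pbwDerivation_X (i j : Fin n) : pbwDerivation κ b i (X j) = C (pbwCoeff κ b i j) :=
  mkDerivation_X _ _ _

theorem pbwDerivation_monomial (i : Fin n) (d : Fin n →₀ ℕ) :
    pbwDerivation κ b i (monomial d 1) =
      ∑ k, (pbwCoeff κ b i k * d k) • monomial (d - Finsupp.single k 1) 1 := by
  rw [pbwDerivation, mkDerivation_monomial, one_smul, Finsupp.sum_fintype _ _ (by simp)]
  refine Finset.sum_congr rfl fun k _ => ?_
  rw [smul_eq_mul, mul_comm, C_mul_monomial, smul_monomial, smul_eq_mul, mul_one]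

theorem pbwDerivation_comm (i j : Fin n) (p : MvPolynomial (Fin n) A) :
    pbwDerivation κ b i (pbwDerivation κ b j p) = pbwDerivation κ b j (pbwDerivation κ b i p) := by
  have h : ⁅pbwDerivation κ b i, pbwDerivation κ b j⁆ = 0 :=
    derivation_ext fun k => by simp [Derivation.commutator_apply, pbwDerivation_X, derivation_C]
  simpa [Derivation.commutator_apply, sub_eq_zero] using congr($h p)

def pbwOp (i : Fin n) : Module.End A (MvPolynomial (Fin n) A) :=
  LinearMap.mulLeft A (X i) + (pbwDerivation κ b i).toLinearMap

theorem pbwOp_apply (i : Fin n) (p : MvPolynomial (Fin n) A) :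
    pbwOp κ b i p = X i * p + pbwDerivation κ b i p := rfl

theorem pbwOp_mul_pbwOp (hκ : ∀ x, κ x x = 0) (i j : Fin n) :
    pbwOp κ b i * pbwOp κ b j = pbwOp κ b j * pbwOp κ b i + algebraMap A _ (κ (b i) (b j)) := by
  refine LinearMap.ext fun p => ?_
  have hD := pbwDerivation_comm κ b i j p
  have hc := congrArg (fun a => C a * p) (pbwCoeff_sub_pbwCoeff κ b hκ i j)
  simp only [Module.End.mul_apply, LinearMap.add_apply, pbwOp_apply, map_add, Derivation.leibniz,
    pbwDerivation_X, smul_eq_mul, Module.algebraMap_end_apply, smul_eq_C_mul, map_sub] at hc ⊢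
  linear_combination hD + hc

def pbwRep : E →ₗ[A] Module.End A (MvPolynomial (Fin n) A) := b.constr A (pbwOp κ b)

theorem pbwRep_basis (i : Fin n) : pbwRep κ b (b i) = pbwOp κ b i := b.constr_basis A _ i

theorem pbwRep_mul_pbwRep (hκ : ∀ x, κ x x = 0) (x y : E) :
    pbwRep κ b x * pbwRep κ b y = pbwRep κ b y * pbwRep κ b x + algebraMap A _ (κ x y) := by
  have key : (LinearMap.mul A _).compl₁₂ (pbwRep κ b) (pbwRep κ b) =
      ((LinearMap.mul A _).compl₁₂ (pbwRep κ b) (pbwRep κ b)).flip +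
        κ.compr₂ (Algebra.linearMap A (Module.End A (MvPolynomial (Fin n) A))) :=
    b.ext fun i => b.ext fun j => by
      simpa [pbwRep_basis] using pbwOp_mul_pbwOp κ b hκ i j
  simpa using congr($key x y)

end Representation

section NormalForm

variable {A : Type*} [CommRing A] {E : Type*} [AddCommGroup E] [Module A E] {n : ℕ}

theorem count_smul_famTensor_erase_cons (f : Fin n → E) {j : Fin n} {I : List (Fin n)}
    (hI : (j :: I).Pairwise (· ≥ ·)) (a : A) (k : Fin n) :
    (a * (j :: I).count k) • famTensor (A := A) f ((j :: I).erase k) =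
      ι A (f j) * ((a * I.count k) • famTensor f (I.erase k)) +
        if j = k then a • famTensor f I else 0 := by
  have hcnt : (a * I.count k) • famTensor (A := A) f ((j :: I).erase k) =
      ι A (f j) * ((a * I.count k) • famTensor f (I.erase k)) := by
    rcases eq_or_ne (I.count k) 0 with h | h
    · simp [h]
    · rw [erase_cons_of_pairwise hI (List.count_pos_iff.mp (Nat.pos_of_ne_zero h)),
        famTensor_cons, mul_smul_comm]
  rw [List.count_cons, ← hcnt]
  split_ifs with hjk <;> simp_all [mul_add, add_smul]

variable (κ : E →ₗ[A] E →ₗ[A] A) (b : Module.Basis (Fin n) A E)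

local notation "μ" => RingQuot.mkAlgHom A (commRel κ)

theorem pbwCoeff_mul_count_eq_zero {i : Fin n} {I : List (Fin n)} (hI : ∀ x ∈ I, x ≤ i)
    (k : Fin n) : pbwCoeff κ b i k * I.count k = 0 := by
  by_cases hik : i < k
  · rw [List.count_eq_zero.mpr fun hk => (hI k hk).not_gt hik, Nat.cast_zero, mul_zero]
  · rw [pbwCoeff, if_neg hik, zero_mul]

theorem mkAlgHom_ι_mul_famTensor {I : List (Fin n)} (hI : I.Pairwise (· ≥ ·)) (i : Fin n) :
    μ (ι A (b i) * famTensor b I) =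
      μ (famTensor b (I.orderedInsert (· ≥ ·) i)) +
        ∑ k, (pbwCoeff κ b i k * I.count k) • μ (famTensor b (I.erase k)) := by
  induction I with
  | nil => simp
  | cons j I ih =>
    obtain ⟨hjI, hI'⟩ := List.pairwise_cons.mp hI
    by_cases hji : j ≤ i
    · have hle : ∀ x ∈ j :: I, x ≤ i := by
        simpa using ⟨hji, fun x hx => (hjI x hx).trans hji⟩
      simp [hji, pbwCoeff_mul_count_eq_zero κ b hle]
    · have hij : i < j := lt_of_not_ge hji
      have hsum : ∑ k, (pbwCoeff κ b i k * (j :: I).count k) •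
            μ (famTensor b ((j :: I).erase k)) =
          μ (ι A (b j)) * ∑ k, (pbwCoeff κ b i k * I.count k) • μ (famTensor b (I.erase k)) +
            pbwCoeff κ b i j • μ (famTensor b I) := by
        simp only [← map_smul, count_smul_famTensor_erase_cons b hI, map_add, map_mul,
          Finset.sum_add_distrib, Finset.mul_sum, apply_ite μ, map_zero, Finset.sum_ite_eq,
          Finset.mem_univ, if_true]
      rw [List.orderedInsert_cons, if_neg hji, hsum, famTensor_cons, famTensor_cons, ← mul_assoc,
        map_mul, mkAlgHom_ι_mul_ι, add_mul, map_mul, mul_assoc, ← map_mul, ih hI', pbwCoeff,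
        if_pos hij, ← Algebra.smul_def, map_mul, mul_add]
      abel

def monomialToTensor : MvPolynomial (Fin n) A →ₗ[A] TensorAlgebra A E :=
  (basisMonomials (Fin n) A).constr A fun d => famTensor b (descWord d)

theorem monomialToTensor_monomial (d : Fin n →₀ ℕ) :
    monomialToTensor b (monomial d 1) = famTensor b (descWord d) := by
  simpa [monomialToTensor] using
    (basisMonomials (Fin n) A).constr_basis A (fun d => famTensor b (descWord d)) d

theorem monomialToTensor_one : monomialToTensor b 1 = 1 := by
  rw [← C_1, ← monomial_zero', monomialToTensor_monomial, descWord_zero, famTensor_nil]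

theorem monomialToTensor_mem (p : MvPolynomial (Fin n) A) : monomialToTensor b p ∈ stildeOf b := by
  induction p using MvPolynomial.induction_on' with
  | monomial d a =>
    rw [← mul_one a, ← smul_eq_mul, ← smul_monomial, map_smul, monomialToTensor_monomial]
    exact Submodule.smul_mem _ a (Submodule.subset_span ⟨_, pairwise_descWord d, rfl⟩)
  | add p q hp hq => rw [map_add]; exact add_mem hp hq

theorem mkAlgHom_monomialToTensor_pbwOp (i : Fin n) (d : Fin n →₀ ℕ) :
    μ (monomialToTensor b (pbwOp κ b i (monomial d 1))) =
      μ (ι A (b i)) * μ (monomialToTensor b (monomial d 1)) := by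
  rw [monomialToTensor_monomial, ← map_mul, mkAlgHom_ι_mul_famTensor κ b (pairwise_descWord d),
    pbwOp_apply, pbwDerivation_monomial, X, monomial_mul, one_mul, map_add, map_sum,
    monomialToTensor_monomial, add_comm (Finsupp.single i 1), descWord_add_single, map_add,
    map_sum]
  congr 1
  refine Finset.sum_congr rfl fun k _ => ?_
  rw [map_smul, map_smul, monomialToTensor_monomial, count_descWord]
  rcases eq_or_ne (d k) 0 with h | h
  · simp [h]
  · rw [descWord_sub_single h]

theorem mkAlgHom_monomialToTensor_pbwRep (x : E) (p : MvPolynomial (Fin n) A) :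
    μ (monomialToTensor b (pbwRep κ b x p)) = μ (ι A x) * μ (monomialToTensor b p) := by
  have hbasis (i : Fin n) : (μ).toLinearMap ∘ₗ monomialToTensor b ∘ₗ pbwRep κ b (b i) =
      LinearMap.mulLeft A (μ (ι A (b i))) ∘ₗ (μ).toLinearMap ∘ₗ monomialToTensor b :=
    (basisMonomials (Fin n) A).ext fun d => by
      simpa [pbwRep_basis] using mkAlgHom_monomialToTensor_pbwOp κ b i d
  rw [← b.sum_repr x]
  simp only [map_sum, map_smul, LinearMap.sum_apply, LinearMap.smul_apply,
    Finset.sum_mul, smul_mul_assoc]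
  exact Finset.sum_congr rfl fun i _ => by simpa using congr(b.repr x i • $(hbasis i) p)

theorem mkAlgHom_monomialToTensor_lift (t : TensorAlgebra A E) (p : MvPolynomial (Fin n) A) :
    μ (monomialToTensor b (lift A (pbwRep κ b) t p)) = μ t * μ (monomialToTensor b p) := by
  induction t using TensorAlgebra.induction generalizing p with
  | algebraMap r =>
    rw [AlgHom.commutes, Module.algebraMap_end_apply, map_smul, map_smul, AlgHom.commutes,
      Algebra.smul_def]
  | ι x => simpa using mkAlgHom_monomialToTensor_pbwRep κ b x p
  | mul s t hs ht => rw [map_mul, Module.End.mul_apply, hs, ht, map_mul, mul_assoc]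
  | add s t hs ht => rw [map_add, LinearMap.add_apply, map_add, map_add, hs, ht, map_add, add_mul]

theorem lift_pbwRep_famTensor {I : List (Fin n)} (hI : I.Pairwise (· ≥ ·)) :
    lift A (pbwRep κ b) (famTensor b I) 1 = monomial (Multiset.toFinsupp I) 1 := by
  induction I with
  | nil => simp
  | cons i I ih =>
    obtain ⟨hiI, hI'⟩ := List.pairwise_cons.mp hI
    have hzero := pbwCoeff_mul_count_eq_zero κ b hiI
    simp only [famTensor_cons, map_mul, lift_ι_apply, pbwRep_basis, Module.End.mul_apply, ih hI',
      pbwOp_apply, pbwDerivation_monomial, Multiset.toFinsupp_apply, Multiset.coe_count, hzero,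
      zero_smul, Finset.sum_const_zero, add_zero]
    rw [← Multiset.cons_coe, ← Multiset.singleton_add, Multiset.toFinsupp_add,
      Multiset.toFinsupp_singleton, X, monomial_mul, one_mul]

def normalForm : TensorAlgebra A E →ₗ[A] TensorAlgebra A E :=
  monomialToTensor b ∘ₗ LinearMap.applyₗ 1 ∘ₗ (lift A (pbwRep κ b)).toLinearMap

theorem normalForm_apply (t : TensorAlgebra A E) :
    normalForm κ b t = monomialToTensor b (lift A (pbwRep κ b) t 1) := rfl

theorem mkAlgHom_normalForm (t : TensorAlgebra A E) : μ (normalForm κ b t) = μ t := by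
  simpa [normalForm_apply, monomialToTensor_one] using mkAlgHom_monomialToTensor_lift κ b t 1

theorem normalForm_mem (t : TensorAlgebra A E) : normalForm κ b t ∈ stildeOf b :=
  monomialToTensor_mem b _

theorem normalForm_of_mem {t : TensorAlgebra A E} (ht : t ∈ stildeOf b) : normalForm κ b t = t := by
  induction ht using Submodule.span_induction with
  | mem t ht =>
    obtain ⟨I, hI, rfl⟩ := ht
    rw [normalForm_apply, lift_pbwRep_famTensor κ b hI, monomialToTensor_monomial,
      descWord_toFinsupp hI]
  | zero => simp
  | add s t _ _ hs ht => rw [map_add, hs, ht]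
  | smul a t _ ht => rw [map_smul, ht]

theorem normalForm_eq_of_mkAlgHom_eq (hκ : ∀ x, κ x x = 0) {s t : TensorAlgebra A E}
    (h : μ s = μ t) : normalForm κ b s = normalForm κ b t := by
  let Φ : RingQuot (commRel κ) →ₐ[A] Module.End A (MvPolynomial (Fin n) A) :=
    RingQuot.liftAlgHom A ⟨lift A (pbwRep κ b), by
      rintro _ _ ⟨x, y, rfl, rfl⟩
      rw [map_add, map_mul, map_mul, AlgHom.commutes, lift_ι_apply, lift_ι_apply,
        pbwRep_mul_pbwRep κ b hκ]⟩
  have hΦ (t : TensorAlgebra A E) : Φ (μ t) = lift A (pbwRep κ b) t :=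
    RingQuot.liftAlgHom_mkAlgHom_apply _ _ _ _
  rw [normalForm_apply, normalForm_apply, ← hΦ, ← hΦ, h]

theorem bijective_mkAlgHom_comp_subtype (hκ : ∀ x, κ x x = 0) :
    Function.Bijective ((μ).toLinearMap.comp (stildeOf b).subtype) := by
  refine ⟨fun s t h => Subtype.ext ?_, fun w => ?_⟩
  · rw [← normalForm_of_mem κ b s.2, ← normalForm_of_mem κ b t.2]
    exact normalForm_eq_of_mkAlgHom_eq κ b hκ h
  · obtain ⟨t, rfl⟩ := RingQuot.mkAlgHom_surjective A _ w
    exact ⟨⟨_, normalForm_mem κ b t⟩, mkAlgHom_normalForm κ b t⟩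

end NormalForm

section ChangeOfBasis

variable (A : Type*) [CommRing A] {E : Type*} [AddCommGroup E] [Module A E] {n : ℕ}

def wordSpan (f : Fin n → E) (s : Set (Fin n)) : Submodule A (TensorAlgebra A E) :=
  Submodule.span A {t | ∃ J : List (Fin n), (∀ j ∈ J, j ∈ s) ∧ t = famTensor f J}

variable {A}

theorem map_span_ι_mul_wordSpan_le (f : Fin n → E) (s : Set (Fin n)) :
    (Submodule.span A (f '' s)).map (ι A) * wordSpan A f s ≤ wordSpan A f s := by
  rw [Submodule.map_span, wordSpan, Submodule.span_mul_span, Submodule.span_le]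
  rintro _ ⟨_, ⟨_, ⟨j, hj, rfl⟩, rfl⟩, _, ⟨J, hJ, rfl⟩, rfl⟩
  exact Submodule.subset_span ⟨j :: J, by simpa [hj] using hJ, (famTensor_cons f j J).symm⟩

theorem famTensor_mem_wordSpan (b : Fin n → E) {s : Set (Fin n)} {f : Fin n → E}
    {I : List (Fin n)} (hI : ∀ i ∈ I, f i ∈ Submodule.span A (b '' s)) :
    famTensor f I ∈ wordSpan A b s := by
  induction I with
  | nil => exact Submodule.subset_span ⟨[], by simp, rfl⟩
  | cons i I ih =>
    rw [famTensor_cons]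
    exact map_span_ι_mul_wordSpan_le b s <| Submodule.mul_mem_mul
      (Submodule.mem_map_of_mem (hI i List.mem_cons_self))
      (ih fun j hj => hI j (List.mem_cons_of_mem i hj))

variable (κ : E →ₗ[A] E →ₗ[A] A) (b : Module.Basis (Fin n) A E)

local notation "μ" => RingQuot.mkAlgHom A (commRel κ)

theorem mkAlgHom_normalForm_zero_famTensor_append {J₁ J₂ : List (Fin n)}
    (h : ∀ x ∈ J₁, ∀ y ∈ J₂, y ≤ x) (h₁ : ∀ x ∈ J₁, ∀ y ∈ J₁, κ (b x) (b y) = 0)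
    (h₂ : ∀ x ∈ J₂, ∀ y ∈ J₂, κ (b x) (b y) = 0) :
    μ (normalForm 0 b (famTensor b (J₁ ++ J₂))) = μ (famTensor b (J₁ ++ J₂)) := by
  have hp₁ := perm_descWord_toFinsupp J₁
  have hp₂ := perm_descWord_toFinsupp J₂
  set S₁ := descWord (Multiset.toFinsupp (J₁ : Multiset (Fin n)))
  set S₂ := descWord (Multiset.toFinsupp (J₂ : Multiset (Fin n)))
  have hS : (S₁ ++ S₂).Pairwise (· ≥ ·) := List.pairwise_append.mpr
    ⟨pairwise_descWord _, pairwise_descWord _,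
      fun x hx y hy => h x (hp₁.subset hx) y (hp₂.subset hy)⟩
  have hN : normalForm 0 b (famTensor b (J₁ ++ J₂)) = famTensor b (S₁ ++ S₂) := by
    rw [← normalForm_of_mem 0 b (Submodule.subset_span ⟨_, hS, rfl⟩)]
    exact normalForm_eq_of_mkAlgHom_eq 0 b (fun _ => rfl)
      (mkAlgHom_famTensor_perm 0 (hp₁.append hp₂).symm fun _ _ _ _ => rfl)
  rw [hN, famTensor_append, famTensor_append, map_mul, map_mul,
    mkAlgHom_famTensor_perm κ hp₁ fun x hx y hy => h₁ x (hp₁.subset hx) y (hp₁.subset hy),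
    mkAlgHom_famTensor_perm κ hp₂ fun x hx y hy => h₂ x (hp₂.subset hx) y (hp₂.subset hy)]

theorem mkAlgHom_normalForm_zero_mul {H : Set (Fin n)} (hH : IsUpperSet H)
    (hκH : ∀ x ∈ H, ∀ y ∈ H, κ (b x) (b y) = 0) (hκHc : ∀ x ∉ H, ∀ y ∉ H, κ (b x) (b y) = 0)
    {s t : TensorAlgebra A E} (hs : s ∈ wordSpan A b H)
    (ht : t ∈ wordSpan A b Hᶜ) : μ (normalForm 0 b (s * t)) = μ (s * t) := by
  have hle : wordSpan A b H * wordSpan A b Hᶜ ≤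
      LinearMap.ker ((μ).toLinearMap ∘ₗ normalForm 0 b - (μ).toLinearMap) := by
    rw [wordSpan, wordSpan, Submodule.span_mul_span, Submodule.span_le]
    rintro _ ⟨_, ⟨J₁, hJ₁, rfl⟩, _, ⟨J₂, hJ₂, rfl⟩, rfl⟩
    have := mkAlgHom_normalForm_zero_famTensor_append κ b
      (fun x hx y hy => le_of_not_gt fun hxy => hJ₂ y hy (hH hxy.le (hJ₁ x hx)))
      (fun x hx y hy => hκH x (hJ₁ x hx) y (hJ₁ y hy))
      (fun x hx y hy => hκHc x (hJ₂ x hx) y (hJ₂ y hy))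
    simpa [sub_eq_zero, famTensor_append] using this
  simpa [sub_eq_zero] using hle (Submodule.mul_mem_mul hs ht)

theorem mkAlgHom_normalForm_zero_of_mem_stildeOf {H : Set (Fin n)} (hH : IsUpperSet H)
    (hκH : ∀ x ∈ H, ∀ y ∈ H, κ (b x) (b y) = 0) (hκHc : ∀ x ∉ H, ∀ y ∉ H, κ (b x) (b y) = 0)
    {f : Fin n → E}
    (hfH : ∀ i ∈ H, f i ∈ Submodule.span A (b '' H))
    (hfHc : ∀ i ∉ H, f i ∈ Submodule.span A (b '' Hᶜ)) {t : TensorAlgebra A E}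
    (ht : t ∈ stildeOf f) : μ (normalForm 0 b t) = μ t := by
  classical
  induction ht using Submodule.span_induction with
  | mem t ht =>
    obtain ⟨I, hI, rfl⟩ := ht
    obtain ⟨J₁, J₂, rfl, hJ₁, hJ₂⟩ := exists_eq_append_of_pairwise hI hH
    rw [famTensor_append]
    exact mkAlgHom_normalForm_zero_mul κ b hH hκH hκHc
      (famTensor_mem_wordSpan b fun i hi => hfH i (hJ₁ i hi))
      (famTensor_mem_wordSpan b fun i hi => hfHc i (hJ₂ i hi))
  | zero => simp
  | add s t _ _ hs ht => rw [map_add, map_add, map_add, hs, ht]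
  | smul a t _ ht => rw [map_smul, map_smul, map_smul, ht]

theorem sum_smul_mem_span_image {ι : Type*} [Fintype ι] {f : ι → E} {c : ι → A} {s : Set ι}
    (hc : ∀ j ∉ s, c j = 0) : ∑ j, c j • f j ∈ Submodule.span A (f '' s) := by
  refine Submodule.sum_mem _ fun j _ => ?_
  by_cases hj : j ∈ s
  · exact Submodule.smul_mem _ _ (Submodule.subset_span ⟨j, hj, rfl⟩)
  · rw [hc j hj, zero_smul]
    exact Submodule.zero_mem _

theorem mem_span_range_natAdd {ν ν' : ℕ} (f : Fin (ν + ν') → E) {z : Fin (ν + ν')}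
    (hz : ν ≤ (z : ℕ)) : f z ∈ Submodule.span A (Set.range fun i : Fin ν' => f (Fin.natAdd ν i)) :=
  Submodule.subset_span ⟨⟨z - ν, by omega⟩, congrArg f (Fin.ext (by simp; omega))⟩

theorem mem_span_range_castAdd {ν ν' : ℕ} (f : Fin (ν + ν') → E) {z : Fin (ν + ν')}
    (hz : (z : ℕ) < ν) : f z ∈ Submodule.span A (Set.range fun i : Fin ν => f (Fin.castAdd ν' i)) :=
  Submodule.subset_span ⟨⟨z, hz⟩, rfl⟩

end ChangeOfBasis

end PBW

end

theorem Module.Basis.exists_coe_eq_of_isUnit_det {ι A E : Type*} [Fintype ι] [DecidableEq ι]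
    [CommRing A] [AddCommGroup E] [Module A E] (e : Module.Basis ι A E) {M : Matrix ι ι A}
    (hM : IsUnit M.det) {e' : ι → E} (he' : ∀ i, e' i = ∑ j, M i j • e j) :
    ∃ b : Module.Basis ι A E, ⇑b = e' := by
  refine ⟨e.map (Matrix.toLinearEquiv e M.transpose (by rwa [Matrix.det_transpose])),
    funext fun i => ?_⟩
  rw [Module.Basis.map_apply, Matrix.toLinearEquiv_apply, Matrix.toLin_self, he' i]
  simp

/-- For a second basis `e'ᵢ = Σⱼ Mᵢʲ eⱼ` given by an invertible
block-diagonal matrix (respecting the splitting `E = L ⊕ L'`), the restrictions of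
`μ_S` and `μ_W` to `S̃'(E)` are `A`-module isomorphisms onto `S(E)` and `W(E)`, and the
composites coincide: `μ_W ∘ (μ_S|S̃'(E))⁻¹ = μ_W ∘ (μ_S|S̃(E))⁻¹`. -/
theorem stmt4 (A : Type*) [CommRing A] (E : Type*) [AddCommGroup E] [Module A E]
    (lam : A) (ω : E →ₗ[A] E →ₗ[A] A) (halt : ∀ x : E, ω x x = 0)
    (ν ν' : ℕ) (e : Module.Basis (Fin (ν + ν')) A E)
    (hLiso : ∀ x ∈ Submodule.span A (Set.range fun i : Fin ν => e (Fin.castAdd ν' i)),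
      ∀ y ∈ Submodule.span A (Set.range fun i : Fin ν => e (Fin.castAdd ν' i)),
        ω x y = 0)
    (hL'iso : ∀ x ∈ Submodule.span A (Set.range fun i : Fin ν' => e (Fin.natAdd ν i)),
      ∀ y ∈ Submodule.span A (Set.range fun i : Fin ν' => e (Fin.natAdd ν i)),
        ω x y = 0)
    (M : Matrix (Fin (ν + ν')) (Fin (ν + ν')) A) (hM : IsUnit M.det)
    (hblock : ∀ i j : Fin (ν + ν'),
      (((i : ℕ) < ν ∧ ¬ (j : ℕ) < ν) ∨ (¬ (i : ℕ) < ν ∧ (j : ℕ) < ν)) → M i j = 0)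
    (e' : Fin (ν + ν') → E) (he' : ∀ i, e' i = ∑ j, M i j • e j) :
    Function.Bijective
      ((RingQuot.mkAlgHom A (symRel A E)).toLinearMap.comp (stildeOf e').subtype) ∧
    Function.Bijective
      ((RingQuot.mkAlgHom A (weylRel A lam ω)).toLinearMap.comp (stildeOf e').subtype) ∧
    (∀ a ∈ stildeOf (⇑e), ∀ a' ∈ stildeOf e',
      RingQuot.mkAlgHom A (symRel A E) a = RingQuot.mkAlgHom A (symRel A E) a' →
        RingQuot.mkAlgHom A (weylRel A lam ω) a =
          RingQuot.mkAlgHom A (weylRel A lam ω) a') := by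
  set H : Set (Fin (ν + ν')) := {i | ν ≤ (i : ℕ)}
  have hH : IsUpperSet H := fun i j hij (hi : ν ≤ (i : ℕ)) => hi.trans hij
  have hisoH : ∀ x ∈ H, ∀ y ∈ H, (lam • ω) (e x) (e y) = 0 := fun x hx y hy => by
    simp [hL'iso _ (PBW.mem_span_range_natAdd e hx) _ (PBW.mem_span_range_natAdd e hy)]
  have hisoHc : ∀ x ∉ H, ∀ y ∉ H, (lam • ω) (e x) (e y) = 0 := fun x hx y hy => by
    simp [hLiso _ (PBW.mem_span_range_castAdd e (not_le.mp hx)) _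
      (PBW.mem_span_range_castAdd e (not_le.mp hy))]
  obtain ⟨e', rfl⟩ := e.exists_coe_eq_of_isUnit_det hM he'
  rw [PBW.symRel_eq_commRel, PBW.weylRel_eq_commRel]
  refine ⟨PBW.bijective_mkAlgHom_comp_subtype 0 e' fun _ => rfl,
    PBW.bijective_mkAlgHom_comp_subtype _ e' fun x => by simp [halt x],
    fun a ha a' ha' h => ?_⟩
  rw [← PBW.normalForm_of_mem 0 e ha, PBW.normalForm_eq_of_mkAlgHom_eq 0 e (fun _ => rfl) h]
  refine PBW.mkAlgHom_normalForm_zero_of_mem_stildeOf _ e hH hisoH hisoHc (fun i hi => ?_)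
    (fun i hi => ?_) ha'
  · rw [he' i]
    exact PBW.sum_smul_mem_span_image fun j hj =>
      hblock i j (Or.inr ⟨not_lt.mpr hi, not_le.mp hj⟩)
  · rw [he' i]
    exact PBW.sum_smul_mem_span_image fun j hj =>
      hblock i j (Or.inl ⟨not_le.mp hi, fun h => hj (not_le.mpr h)⟩)
end
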